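/- The function y = η(τ)^{-2}, where η is the Dedekind eta function, satisfies the differential equation y'' + (π²/36)·E₄(τ)·y = 0 on the upper half-plane, given the Ramanujan identity (1/(2πi))E₂' = (E₂² - E₄)/12 and the logarithmic derivative identity η'/η = (πi/12)E₂. -/

import Mathlib

open Complex

/-- The Dedekind eta function `η(τ) = q^{1/24} ∏_{n≥1} (1 - qⁿ)`, `q = exp(2πiτ)`. -/
noncomputable def dedekindEta (τ : ℂ) : ℂ :=
  Complex.exp (Real.pi * Complex.I * τ / 12) *
    ∏' n : ℕ, (1 - Complex.exp (2 * Real.pi * Complex.I * τ) ^ (n + 1))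

/-- The weight 2 Eisenstein series `E₂(τ) = 1 - 24 ∑_{n≥1} σ₁(n) qⁿ`. -/
noncomputable def Eis₂ (τ : ℂ) : ℂ :=
  1 - 24 * ∑' n : ℕ, (ArithmeticFunction.sigma 1 (n + 1) : ℂ) *
    Complex.exp (2 * Real.pi * Complex.I * τ) ^ (n + 1)

/-- The weight 4 Eisenstein series `E₄(τ) = 1 + 240 ∑_{n≥1} σ₃(n) qⁿ`. -/
noncomputable def Eis₄ (τ : ℂ) : ℂ :=
  1 + 240 * ∑' n : ℕ, (ArithmeticFunction.sigma 3 (n + 1) : ℂ) *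
    Complex.exp (2 * Real.pi * Complex.I * τ) ^ (n + 1)

/-!
With `a = πi/12`, the hypotheses say `η' = a E₂ η` and `E₂' = 2a (E₂² - E₄)`. For `y = η⁻²` this
gives `y' = -2a E₂ y`, and differentiating once more the `E₂²` terms cancel:
`y'' = -2a (E₂' - 2a E₂²) y = 4a² E₄ y = -(π²/36) E₄ y`.
-/

section InverseSquare

variable {𝕜 : Type*} [NontriviallyNormedField 𝕜] {U : Set 𝕜} {f g h : 𝕜 → 𝕜} {a : 𝕜}

theorem hasDerivAt_one_div_sq {f' z : 𝕜} (hf : HasDerivAt f f' z) (hz : f z ≠ 0) :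
    HasDerivAt (fun t => 1 / f t ^ 2) (-2 * (f' / f z) * (1 / f z ^ 2)) z := by
  refine ((hasDerivAt_const z 1).fun_div (hf.fun_pow 2) (pow_ne_zero 2 hz)).congr_deriv ?_
  field_simp
  norm_num
  ring

theorem deriv_one_div_sq_of_logDeriv_eq (hU : IsOpen U) (hf : DifferentiableOn 𝕜 f U)
    (hf0 : ∀ z ∈ U, f z ≠ 0) (hlog : ∀ z ∈ U, logDeriv f z = a * g z) :
    Set.EqOn (deriv fun t => 1 / f t ^ 2) (fun z => -2 * a * (g z * (1 / f z ^ 2))) U := by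
  intro z hz
  have hfz := (hf.differentiableAt (hU.mem_nhds hz)).hasDerivAt
  rw [(hasDerivAt_one_div_sq hfz (hf0 z hz)).deriv, ← logDeriv_apply, hlog z hz]
  ring

theorem deriv_deriv_one_div_sq_of_logDeriv_eq (hU : IsOpen U) (hf : DifferentiableOn 𝕜 f U)
    (hf0 : ∀ z ∈ U, f z ≠ 0) (hlog : ∀ z ∈ U, logDeriv f z = a * g z)
    (hg : DifferentiableOn 𝕜 g U) (hg' : ∀ z ∈ U, deriv g z = 2 * a * (g z ^ 2 - h z)) :
    ∀ z ∈ U, deriv (deriv fun t => 1 / f t ^ 2) z = 4 * a ^ 2 * h z * (1 / f z ^ 2) := by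
  intro z hz
  have hy := deriv_one_div_sq_of_logDeriv_eq hU hf hf0 hlog
  have hfz := (hf.differentiableAt (hU.mem_nhds hz)).hasDerivAt
  have hyd : HasDerivAt (fun t => 1 / f t ^ 2) (deriv (fun t => 1 / f t ^ 2) z) z :=
    (hasDerivAt_one_div_sq hfz (hf0 z hz)).differentiableAt.hasDerivAt
  have hgy : HasDerivAt (fun z => -2 * a * (g z * (1 / f z ^ 2)))
      (-2 * a * (deriv g z * (1 / f z ^ 2) + g z * deriv (fun t => 1 / f t ^ 2) z)) z :=
    ((hg.differentiableAt (hU.mem_nhds hz)).hasDerivAt.mul hyd).const_mul _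
  rw [(hy.eventuallyEq_of_mem (hU.mem_nhds hz)).deriv_eq, hgy.deriv, hy hz, hg' z hz]
  ring

end InverseSquare

theorem differentiableOn_of_logDeriv_eq_mul {U : Set ℂ} {f g : ℂ → ℂ} {a : ℂ} (ha : a ≠ 0)
    (hU : IsOpen U) (hf : DifferentiableOn ℂ f U) (hf0 : ∀ z ∈ U, f z ≠ 0)
    (hlog : ∀ z ∈ U, logDeriv f z = a * g z) : DifferentiableOn ℂ g U := by
  have hlogf : DifferentiableOn ℂ (fun z => a⁻¹ * logDeriv f z) U :=
    ((hf.deriv hU).div hf hf0).const_mul _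
  refine hlogf.congr fun z hz => ?_
  rw [hlog z hz, inv_mul_cancel_left₀ ha]

theorem stmt_6 (Ω : Set ℂ) (hΩ : Ω = {z : ℂ | 0 < z.im})
    (hη : AnalyticOn ℂ dedekindEta Ω)
    (hηne : ∀ τ ∈ Ω, dedekindEta τ ≠ 0)
    (hlog : ∀ τ ∈ Ω, deriv dedekindEta τ / dedekindEta τ =
      Real.pi * Complex.I / 12 * Eis₂ τ)
    (hRamanujan : ∀ τ ∈ Ω,
      1 / (2 * Real.pi * Complex.I) * deriv Eis₂ τ = (Eis₂ τ ^ 2 - Eis₄ τ) / 12) :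
    ∀ τ ∈ Ω,
      deriv (deriv fun t => 1 / dedekindEta t ^ 2) τ
        + Real.pi ^ 2 / 36 * Eis₄ τ * (1 / dedekindEta τ ^ 2) = 0 := by
  have hΩo : IsOpen Ω := hΩ ▸ isOpen_im_gt 0
  have hπI : (Real.pi : ℂ) * I ≠ 0 := mul_ne_zero (ofReal_ne_zero.mpr Real.pi_ne_zero) I_ne_zero
  have hE₂ : DifferentiableOn ℂ Eis₂ Ω :=
    differentiableOn_of_logDeriv_eq_mul (div_ne_zero hπI (by norm_num)) hΩo hη.differentiableOn
      hηne hlog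
  have hE₂' : ∀ τ ∈ Ω, deriv Eis₂ τ = 2 * (Real.pi * I / 12) * (Eis₂ τ ^ 2 - Eis₄ τ) := by
    intro τ hτ
    have h := hRamanujan τ hτ
    field_simp at h ⊢
    linear_combination h
  intro τ hτ
  rw [deriv_deriv_one_div_sq_of_logDeriv_eq hΩo hη.differentiableOn hηne hlog hE₂ hE₂' τ hτ]
  linear_combination ((Real.pi : ℂ) ^ 2 / 36 * Eis₄ τ * (1 / dedekindEta τ ^ 2)) * I_sq
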